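/- Let n ≥ 2 and let a, b be integers with 0 ≤ b ≤ n-1, -2 ≤ 2a, and 2a < b²/(2(n-1)). Then 2a - b²/(2(n-1)) = -(n+3)/2 if and only if a = -1 and b = n-1. -/

import Mathlib

/-
Clearing denominators turns the equation into `b² = m (4a + m + 4)` with `m = n - 1 > 0`.
Since `b ≤ m`, the right side is at most `m²`, forcing `4a + 4 ≤ 0`; together with `a ≥ -1` this
gives `a = -1`, and then `b² = m²` with `b ≥ 0` gives `b = m`.
-/

theorem two_mul_sub_sq_div_eq_iff {n a b : ℤ} (hn : n ≠ 1) :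
    (2 * a : ℚ) - (b : ℚ) ^ 2 / (2 * (n - 1)) = -((n : ℚ) + 3) / 2 ↔
      b ^ 2 = (n - 1) * (4 * a + (n - 1) + 4) := by
  have hn' : (n : ℚ) - 1 ≠ 0 := sub_ne_zero.mpr (by exact_mod_cast hn)
  rw [← Int.cast_inj (α := ℚ)]
  push_cast
  field_simp
  constructor <;> intro h <;> linarith

theorem sq_eq_mul_add_four_iff {m a b : ℤ} (hm : 0 < m) (hb0 : 0 ≤ b) (hb : b ≤ m)
    (ha : -2 ≤ 2 * a) : b ^ 2 = m * (4 * a + m + 4) ↔ a = -1 ∧ b = m := by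
  constructor
  · intro h
    have hbm : b ^ 2 ≤ m ^ 2 := pow_le_pow_left₀ hb0 hb 2
    have ha' : a = -1 := by
      have hle : m * (4 * a + 4) ≤ m * 0 := by linarith
      have := le_of_mul_le_mul_left hle hm
      omega
    subst ha'
    refine ⟨rfl, (sq_eq_sq₀ hb0 hm.le).mp ?_⟩
    linarith
  · rintro ⟨rfl, rfl⟩
    ring

theorem stmt_6_general (n a b : ℤ) (hn : 2 ≤ n) (hb0 : 0 ≤ b) (hb : b ≤ n - 1)
    (ha : -2 ≤ 2 * a) :
    (2 * a : ℚ) - (b : ℚ) ^ 2 / (2 * (n - 1)) = -((n : ℚ) + 3) / 2 ↔ a = -1 ∧ b = n - 1 := by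
  rw [two_mul_sub_sq_div_eq_iff (by omega)]
  exact sq_eq_mul_add_four_iff (by omega) hb0 hb ha

theorem stmt_6 (n a b : ℤ) (hn : 2 ≤ n) (hb0 : 0 ≤ b) (hb : b ≤ n - 1)
    (ha : -2 ≤ 2 * a) (hab : (2 * a : ℚ) < (b : ℚ) ^ 2 / (2 * (n - 1))) :
    (2 * a : ℚ) - (b : ℚ) ^ 2 / (2 * (n - 1)) = -((n : ℚ) + 3) / 2 ↔ a = -1 ∧ b = n - 1 :=
  stmt_6_general n a b hn hb0 hb ha
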